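/- For all complex numbers x, y and every nonnegative integer n, (x + y)·p_{2n,μ}(x,y) = p_{2n+1,μ}(x,y). -/

import Mathlib

open Finset

/-- The μ-deformed factorial function γ_μ. -/
noncomputable def gammaMu (μ : ℝ) : ℕ → ℝ
  | 0 => 1
  | n + 1 => ((n + 1 : ℝ) + 2 * μ * (if Odd (n + 1) then 1 else 0)) * gammaMu μ n

/-- The μ-deformed binomial coefficient C_μ(n,k), zero outside 0 ≤ k ≤ n. -/
noncomputable def binomMu (μ : ℝ) (n : ℕ) (k : ℤ) : ℝ :=
  if 0 ≤ k ∧ k ≤ (n : ℤ) then gammaMu μ n / (gammaMu μ (n - k.toNat) * gammaMu μ k.toNat) else 0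

/-- The n-th μ-deformed binomial polynomial p_{n,μ}(x,y). -/
noncomputable def pMu (μ : ℝ) (n : ℕ) (x y : ℂ) : ℂ :=
  ∑ k ∈ Finset.range (n + 1), (binomMu μ n k : ℂ) * x ^ k * y ^ (n - k)

/-- The μ-deformed exponential function. -/
noncomputable def expMu (μ : ℝ) (z : ℂ) : ℂ :=
  ∑' n : ℕ, z ^ n / (gammaMu μ n : ℂ)

/-- The Bessel function of the first kind of order ν, for positive real argument. -/
noncomputable def besselJ (ν x : ℝ) : ℝ :=
  ∑' m : ℕ, ((-1) ^ m / (Nat.factorial m * Real.Gamma (ν + m + 1))) * (x / 2) ^ ((2 * m : ℝ) + ν)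


/-! Multiplying by `x + y` shifts coefficients, so the identity is Pascal's rule
`C_μ(2n+1, k) = C_μ(2n, k-1) + C_μ(2n, k)`. Since `k` and `2n+1-k` have opposite parity, the
factors `k + 2μθ(k)` and `(2n+1-k) + 2μθ(2n+1-k)` peeled off `γ_μ(k)` and `γ_μ(2n+1-k)` add up to
`2n+1+2μ`, the factor relating `γ_μ(2n+1)` to `γ_μ(2n)`. -/

noncomputable def gammaMuFactor (μ : ℝ) (n : ℕ) : ℝ :=
  n + 2 * μ * (if Odd n then 1 else 0)

lemma gammaMu_succ (μ : ℝ) (n : ℕ) :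
    gammaMu μ (n + 1) = gammaMuFactor μ (n + 1) * gammaMu μ n := by
  simp [gammaMu, gammaMuFactor]

lemma gammaMuFactor_add (μ : ℝ) {a b : ℕ} (hab : ¬(Odd a ∧ Odd b)) :
    gammaMuFactor μ (a + b) = gammaMuFactor μ a + gammaMuFactor μ b := by
  by_cases ha : Odd a <;> by_cases hb : Odd b <;>
    simp_all [gammaMuFactor, Nat.odd_add, ← Nat.not_odd_iff_even] <;> ring

lemma gammaMuFactor_pos {μ : ℝ} (hμ : -(1/2 : ℝ) < μ) {n : ℕ} (hn : 0 < n) :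
    0 < gammaMuFactor μ n := by
  have hn' : (1 : ℝ) ≤ n := by exact_mod_cast hn
  unfold gammaMuFactor
  split_ifs <;> linarith

lemma gammaMu_pos {μ : ℝ} (hμ : -(1/2 : ℝ) < μ) (n : ℕ) : 0 < gammaMu μ n := by
  induction n with
  | zero => simp [gammaMu]
  | succ n ih => rw [gammaMu_succ]; exact mul_pos (gammaMuFactor_pos hμ n.succ_pos) ih

/-- Pascal's rule for `γ_μ`, in the form `C_μ(a+b+2, a+1) = C_μ(a+b+1, a) + C_μ(a+b+1, a+1)`. -/
lemma gammaMu_pascal {μ : ℝ} (hμ : -(1/2 : ℝ) < μ) {a b : ℕ} (hab : ¬(Odd (a + 1) ∧ Odd (b + 1))) :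
    gammaMu μ (a + b + 2) / (gammaMu μ (b + 1) * gammaMu μ (a + 1)) =
      gammaMu μ (a + b + 1) / (gammaMu μ (b + 1) * gammaMu μ a) +
        gammaMu μ (a + b + 1) / (gammaMu μ b * gammaMu μ (a + 1)) := by
  have ha := (gammaMu_pos hμ a).ne'
  have hb := (gammaMu_pos hμ b).ne'
  have hwa := (gammaMuFactor_pos hμ a.succ_pos).ne'
  have hwb := (gammaMuFactor_pos hμ b.succ_pos).ne'
  rw [gammaMu_succ μ (a + b + 1), show a + b + 1 + 1 = (a + 1) + (b + 1) by ring,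
    gammaMuFactor_add μ hab, gammaMu_succ μ a, gammaMu_succ μ b]
  field_simp

lemma binomMu_eq_zero {μ : ℝ} {n : ℕ} {k : ℤ} (hk : ¬(0 ≤ k ∧ k ≤ n)) : binomMu μ n k = 0 :=
  if_neg hk

lemma binomMu_natCast {μ : ℝ} {n k : ℕ} (hk : k ≤ n) :
    binomMu μ n k = gammaMu μ n / (gammaMu μ (n - k) * gammaMu μ k) := by
  simp [binomMu, hk]

lemma binomMu_zero_right {μ : ℝ} (hμ : -(1/2 : ℝ) < μ) (n : ℕ) : binomMu μ n 0 = 1 := by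
  rw [← Nat.cast_zero, binomMu_natCast n.zero_le]
  simp [gammaMu, (gammaMu_pos hμ n).ne']

lemma binomMu_self {μ : ℝ} (hμ : -(1/2 : ℝ) < μ) (n : ℕ) : binomMu μ n n = 1 := by
  rw [binomMu_natCast le_rfl]
  simp [gammaMu, (gammaMu_pos hμ n).ne']

lemma binomMu_succ_of_even {μ : ℝ} (hμ : -(1/2 : ℝ) < μ) {m : ℕ} (hm : Even m) (k : ℤ) :
    binomMu μ (m + 1) k = binomMu μ m (k - 1) + binomMu μ m k := by
  rcases lt_trichotomy k 0 with hk | rfl | hk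
  · rw [binomMu_eq_zero, binomMu_eq_zero, binomMu_eq_zero, add_zero] <;> omega
  · rw [binomMu_zero_right hμ, binomMu_zero_right hμ, binomMu_eq_zero, zero_add]
    omega
  obtain ⟨a, rfl⟩ : ∃ a : ℕ, k = (a + 1 : ℕ) := ⟨k.toNat - 1, by omega⟩
  rw [Nat.cast_succ a, add_sub_cancel_right, ← Nat.cast_succ]
  rcases lt_trichotomy a m with ha | rfl | ha
  · obtain ⟨b, rfl⟩ : ∃ b, m = a + b + 1 := ⟨m - a - 1, by omega⟩
    have hab : ¬(Odd (a + 1) ∧ Odd (b + 1)) := by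
      rintro ⟨⟨i, hi⟩, ⟨j, hj⟩⟩
      obtain ⟨l, hl⟩ := hm
      omega
    rw [binomMu_natCast (by omega), binomMu_natCast (by omega), binomMu_natCast (by omega),
      show a + b + 1 + 1 - (a + 1) = b + 1 by omega, show a + b + 1 - a = b + 1 by omega,
      show a + b + 1 - (a + 1) = b by omega]
    exact gammaMu_pascal hμ hab
  · rw [binomMu_self hμ, binomMu_self hμ, binomMu_eq_zero, add_zero]
    omega
  · rw [binomMu_eq_zero, binomMu_eq_zero, binomMu_eq_zero, add_zero] <;> omega

lemma add_mul_sum_range_of_pascal {R : Type*} [CommSemiring R] (m : ℕ) (c d : ℤ → R)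
    (hd : ∀ k, d k = c (k - 1) + c k) (hlo : c (-1) = 0) (hhi : c (m + 1) = 0) (x y : R) :
    (x + y) * ∑ k ∈ range (m + 1), c k * x ^ k * y ^ (m - k) =
      ∑ k ∈ range (m + 2), d k * x ^ k * y ^ (m + 1 - k) := by
  simp only [hd, add_mul, sum_add_distrib]
  congr 1
  · rw [sum_range_succ' _ (m + 1), mul_sum]
    simp only [Nat.cast_zero, zero_sub, hlo, zero_mul, add_zero, Nat.cast_succ,
      add_sub_cancel_right, Nat.add_sub_add_right]
    refine sum_congr rfl fun k _ => ?_
    ring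
  · rw [sum_range_succ _ (m + 1), mul_sum]
    simp only [Nat.cast_succ, hhi, zero_mul, add_zero]
    refine sum_congr rfl fun k hk => ?_
    rw [show m + 1 - k = m - k + 1 by grind]
    ring

theorem pMu_mul_even (μ : ℝ) (hμ : -(1/2 : ℝ) < μ) (n : ℕ) (x y : ℂ) :
    (x + y) * pMu μ (2 * n) x y = pMu μ (2 * n + 1) x y := by
  refine add_mul_sum_range_of_pascal (2 * n) (fun k => (binomMu μ (2 * n) k : ℂ))
    (fun k => (binomMu μ (2 * n + 1) k : ℂ)) (fun k => ?_) ?_ ?_ x y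
  · exact_mod_cast binomMu_succ_of_even hμ (even_two_mul n) k
  · rw [binomMu_eq_zero (by omega), Complex.ofReal_zero]
  · rw [binomMu_eq_zero (by omega), Complex.ofReal_zero]
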